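/- Let Σ be symmetric with top-k projector Π* and eigengap γ = λ_k − λ_{k+1} > 0. For any X ∈ F^k, ⟨Σ, Π* − X⟩ ≥ 0, i.e., Π* maximizes the linear functional ⟨Σ, ·⟩ over the Fantope; moreover ⟨Σ, Π* − X⟩ ≥ (γ/2)‖Π* − X‖_F², so if ⟨Σ, Π* − X⟩ = 0 then X = Π*. -/

import Mathlib

open Matrix BigOperators Finset

noncomputable def fip {p : ℕ} (A B : Matrix (Fin p) (Fin p) ℝ) : ℝ := (Aᵀ * B).trace

noncomputable def fnorm {p : ℕ} (A : Matrix (Fin p) (Fin p) ℝ) : ℝ :=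
  Real.sqrt (∑ i, ∑ j, (A i j) ^ 2)

def Fantope {p : ℕ} (k : ℕ) (X : Matrix (Fin p) (Fin p) ℝ) : Prop :=
  X.IsSymm ∧ X.PosSemidef ∧ (1 - X).PosSemidef ∧ X.trace = (k : ℝ)

/-- The orthogonal projector onto the span of the top-`k` eigenvectors. -/
def topProj {p : ℕ} (k : ℕ) (u : Fin p → Fin p → ℝ) : Matrix (Fin p) (Fin p) ℝ :=
  ∑ i ∈ Finset.univ.filter (fun i : Fin p => (i : ℕ) < k), vecMulVec (u i) (u i)

/-! In the eigenbasis, `⟨Σ, Π* - X⟩ = ∑ λᵢ dᵢ` with `dᵢ = uᵢᵀ (Π* - X) uᵢ`. Since `0 ⪯ X ⪯ I`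
and `tr X = k = tr Π*`, the `dᵢ` are nonnegative for `i < k`, nonpositive for `i ≥ k` and sum to
zero, so `∑ λᵢ dᵢ ≥ γ D` with `D = ∑_{i<k} dᵢ = ⟨Π*, Π* - X⟩`. On the other hand
`tr X² ≤ tr X = k = ‖Π*‖²`, whence `‖Π* - X‖² ≤ 2 D`. -/

lemma trace_vecMulVec_mul {n R : Type*} [Fintype n] [CommSemiring R] (v w : n → R)
    (M : Matrix n n R) : (vecMulVec v w * M).trace = w ⬝ᵥ (M *ᵥ v) := by
  rw [vecMulVec_mul, trace_vecMulVec, dotProduct_mulVec]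
  exact dotProduct_comm _ _

section Frobenius

variable {p : ℕ}

lemma fip_comm (A B : Matrix (Fin p) (Fin p) ℝ) : fip A B = fip B A := by
  rw [fip, fip, ← trace_transpose, transpose_mul, transpose_transpose]

lemma fip_sub_left (A B C : Matrix (Fin p) (Fin p) ℝ) : fip (A - B) C = fip A C - fip B C := by
  simp only [fip, transpose_sub, sub_mul, trace_sub]

lemma fip_sub_right (A B C : Matrix (Fin p) (Fin p) ℝ) : fip A (B - C) = fip A B - fip A C := by
  simp only [fip, mul_sub, trace_sub]

lemma fip_sum_left {ι : Type*} (s : Finset ι) (A : ι → Matrix (Fin p) (Fin p) ℝ)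
    (B : Matrix (Fin p) (Fin p) ℝ) : fip (∑ i ∈ s, A i) B = ∑ i ∈ s, fip (A i) B := by
  simp only [fip, transpose_sum, sum_mul, trace_sum]

lemma fip_smul_left (c : ℝ) (A B : Matrix (Fin p) (Fin p) ℝ) : fip (c • A) B = c * fip A B := by
  simp only [fip, transpose_smul, smul_mul, trace_smul, smul_eq_mul]

lemma fip_vecMulVec_self (v : Fin p → ℝ) (M : Matrix (Fin p) (Fin p) ℝ) :
    fip (vecMulVec v v) M = v ⬝ᵥ (M *ᵥ v) := by
  rw [fip, transpose_vecMulVec, trace_vecMulVec_mul]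

lemma fnorm_sq (A : Matrix (Fin p) (Fin p) ℝ) : fnorm A ^ 2 = fip A A := by
  rw [fnorm, Real.sq_sqrt (by positivity), fip, trace]
  simp only [diag_apply, mul_apply, transpose_apply, sq]
  exact Finset.sum_comm

lemma fip_self_eq_zero_iff {A : Matrix (Fin p) (Fin p) ℝ} : fip A A = 0 ↔ A = 0 := by
  rw [fip, ← conjTranspose_eq_transpose_of_trivial, trace_conjTranspose_mul_self_eq_zero_iff]

end Frobenius

open scoped MatrixOrder in
lemma Matrix.PosSemidef.trace_mul_self_le_trace {n : Type*} [Fintype n] [DecidableEq n]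
    {X : Matrix n n ℝ} (h0 : X.PosSemidef) (h1 : (1 - X).PosSemidef) :
    (X * X).trace ≤ X.trace := by
  obtain ⟨B, rfl⟩ := CStarAlgebra.nonneg_iff_eq_star_mul_self.mp h0.nonneg
  -- `tr (X (1 - X)) = tr (B (1 - X) Bᴴ) ≥ 0` for `X = Bᴴ B`
  have := (h1.mul_mul_conjTranspose_same B).trace_nonneg
  rw [trace_mul_cycle, mul_sub, mul_one, trace_sub] at this
  simpa [star_eq_conjTranspose, mul_assoc] using this

lemma sub_mul_sum_le_sum_mul_of_sum_eq_zero {ι : Type*} [Fintype ι] [DecidableEq ι]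
    (s : Finset ι) {l d : ι → ℝ} {a b : ℝ} (hd : ∑ i, d i = 0)
    (hd_mem : ∀ i ∈ s, 0 ≤ d i) (hd_not_mem : ∀ i ∉ s, d i ≤ 0)
    (hl_mem : ∀ i ∈ s, a ≤ l i) (hl_not_mem : ∀ i ∉ s, l i ≤ b) :
    (a - b) * ∑ i ∈ s, d i ≤ ∑ i, l i * d i := by
  rw [← Finset.sum_add_sum_compl s d] at hd
  have h_mem : a * ∑ i ∈ s, d i ≤ ∑ i ∈ s, l i * d i := by
    rw [Finset.mul_sum]
    exact Finset.sum_le_sum fun i hi => mul_le_mul_of_nonneg_right (hl_mem i hi) (hd_mem i hi)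
  have h_not_mem : b * ∑ i ∈ sᶜ, d i ≤ ∑ i ∈ sᶜ, l i * d i := by
    rw [Finset.mul_sum]
    refine Finset.sum_le_sum fun i hi => ?_
    have hi := Finset.mem_compl.mp hi
    exact mul_le_mul_of_nonpos_right (hl_not_mem i hi) (hd_not_mem i hi)
  have h_compl : ∑ i ∈ sᶜ, d i = -∑ i ∈ s, d i := by linarith
  rw [h_compl] at h_not_mem
  rw [← Finset.sum_add_sum_compl s fun i => l i * d i]
  linarith

section Orthonormal

variable {n : Type*} [Fintype n] [DecidableEq n] {u : n → n → ℝ}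

lemma sum_vecMulVec_self_eq_one (horth : ∀ i j, u i ⬝ᵥ u j = if i = j then 1 else 0) :
    ∑ i, vecMulVec (u i) (u i) = 1 := by
  have hrows : of u * (of u)ᵀ = 1 := by
    ext i j
    simpa [mul_apply, one_apply, dotProduct] using horth i j
  rw [← mul_eq_one_comm.mp hrows]
  ext a b
  simp [mul_apply, Matrix.sum_apply, vecMulVec_apply]

lemma trace_eq_sum_dotProduct_mulVec (horth : ∀ i j, u i ⬝ᵥ u j = if i = j then 1 else 0)
    (M : Matrix n n ℝ) : M.trace = ∑ i, u i ⬝ᵥ (M *ᵥ u i) := by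
  calc M.trace = ((∑ i, vecMulVec (u i) (u i)) * M).trace := by
        rw [sum_vecMulVec_self_eq_one horth, one_mul]
    _ = ∑ i, u i ⬝ᵥ (M *ᵥ u i) := by simp only [sum_mul, trace_sum, trace_vecMulVec_mul]

end Orthonormal

section TopProjector

variable {p k : ℕ} {u : Fin p → Fin p → ℝ}

lemma fip_topProj (M : Matrix (Fin p) (Fin p) ℝ) :
    fip (topProj k u) M = ∑ i ∈ univ.filter (fun i : Fin p => (i : ℕ) < k), u i ⬝ᵥ (M *ᵥ u i) := by
  simp only [topProj, fip_sum_left, fip_vecMulVec_self]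

lemma topProj_mulVec (horth : ∀ i j, u i ⬝ᵥ u j = if i = j then 1 else 0) (i : Fin p) :
    topProj k u *ᵥ u i = if (i : ℕ) < k then u i else 0 := by
  simp [topProj, sum_mulVec, vecMulVec_mulVec, horth]

lemma dotProduct_topProj_mulVec (horth : ∀ i j, u i ⬝ᵥ u j = if i = j then 1 else 0)
    (i : Fin p) : u i ⬝ᵥ (topProj k u *ᵥ u i) = if (i : ℕ) < k then 1 else 0 := by
  rw [topProj_mulVec horth]
  split_ifs <;> simp [horth]

lemma trace_topProj (horth : ∀ i j, u i ⬝ᵥ u j = if i = j then 1 else 0) (hkp : k ≤ p) :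
    (topProj k u).trace = k := by
  simp [topProj, trace_sum, horth, Fin.card_filter_val_lt, hkp]

lemma fip_topProj_self (horth : ∀ i j, u i ⬝ᵥ u j = if i = j then 1 else 0) (hkp : k ≤ p) :
    fip (topProj k u) (topProj k u) = k := by
  simp [fip_topProj, dotProduct_topProj_mulVec horth, filter_filter, Fin.card_filter_val_lt, hkp]

end TopProjector

lemma fip_sub_self_le_two_mul_fip_sub {p : ℕ} {P X : Matrix (Fin p) (Fin p) ℝ}
    (hP : fip P P = X.trace) (h0 : X.PosSemidef) (h1 : (1 - X).PosSemidef) :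
    fip (P - X) (P - X) ≤ 2 * fip P (P - X) := by
  have hXX : fip X X ≤ X.trace := by
    rw [fip, ← conjTranspose_eq_transpose_of_trivial, h0.isHermitian.eq]
    exact h0.trace_mul_self_le_trace h1
  rw [fip_sub_left, fip_sub_right, fip_sub_right, fip_comm X P]
  linarith

lemma mul_fip_topProj_sub_le {p k : ℕ} {l : Fin p → ℝ} {u : Fin p → Fin p → ℝ}
    {X : Matrix (Fin p) (Fin p) ℝ} {a b : ℝ} (horth : ∀ i j, u i ⬝ᵥ u j = if i = j then 1 else 0)
    (hkp : k ≤ p) (h0 : X.PosSemidef) (h1 : (1 - X).PosSemidef) (htr : X.trace = k)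
    (ha : ∀ i : Fin p, (i : ℕ) < k → a ≤ l i) (hb : ∀ i : Fin p, k ≤ (i : ℕ) → l i ≤ b) :
    (a - b) * fip (topProj k u) (topProj k u - X) ≤
      fip (∑ i, l i • vecMulVec (u i) (u i)) (topProj k u - X) := by
  have hX_le_one : ∀ i, u i ⬝ᵥ (X *ᵥ u i) ≤ 1 := fun i => by
    have := h1.dotProduct_mulVec_nonneg (u i)
    simp only [star_trivial, sub_mulVec, one_mulVec, dotProduct_sub, horth, ite_true] at this
    linarith
  have hd : ∀ i, u i ⬝ᵥ ((topProj k u - X) *ᵥ u i) =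
      (if (i : ℕ) < k then 1 else 0) - u i ⬝ᵥ (X *ᵥ u i) := fun i => by
    rw [sub_mulVec, dotProduct_sub, dotProduct_topProj_mulVec horth]
  simp only [fip_topProj, fip_sum_left, fip_smul_left, fip_vecMulVec_self]
  apply sub_mul_sum_le_sum_mul_of_sum_eq_zero
  · rw [← trace_eq_sum_dotProduct_mulVec horth, trace_sub, trace_topProj horth hkp, htr, sub_self]
  · intro i hi
    rw [hd, if_pos (mem_filter.mp hi).2]
    linarith [hX_le_one i]
  · intro i hi
    rw [hd, if_neg fun h => hi (mem_filter.mpr ⟨mem_univ i, h⟩)]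
    simpa using h0.dotProduct_mulVec_nonneg (u i)
  · exact fun i hi => ha i (mem_filter.mp hi).2
  · exact fun i hi => hb i (by simpa using hi)

/-- with eigengap γ = λ_k − λ_{k+1} > 0, the top-k projector Π*
maximizes ⟨Σ, ·⟩ over the Fantope: for any X ∈ F^k, ⟨Σ, Π* − X⟩ ≥ 0, and moreover
⟨Σ, Π* − X⟩ ≥ (γ/2)‖Π* − X‖_F², so ⟨Σ, Π* − X⟩ = 0 forces X = Π*. -/
theorem top_projector_unique_maximizer (p k : ℕ) (hkp : k < p)
    (Sig : Matrix (Fin p) (Fin p) ℝ) (l : Fin p → ℝ) (u : Fin p → Fin p → ℝ)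
    (hdecomp : Sig = ∑ i, l i • vecMulVec (u i) (u i))
    (horth : ∀ i j, u i ⬝ᵥ u j = if i = j then (1 : ℝ) else 0)
    (hl : Antitone l)
    (hgap : l ⟨k, hkp⟩ < l ⟨k - 1, by omega⟩) :
    ∀ X : Matrix (Fin p) (Fin p) ℝ, Fantope k X →
      0 ≤ fip Sig (topProj k u - X) ∧
      (l ⟨k - 1, by omega⟩ - l ⟨k, hkp⟩) / 2 * fnorm (topProj k u - X) ^ 2 ≤
        fip Sig (topProj k u - X) ∧
      (fip Sig (topProj k u - X) = 0 → X = topProj k u) := by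
  rintro X ⟨-, hX0, hX1, hXtr⟩
  set γ := l ⟨k - 1, by omega⟩ - l ⟨k, hkp⟩
  set P := topProj k u
  have hγ : 0 < γ := sub_pos.mpr hgap
  have hlower : γ * fip P (P - X) ≤ fip Sig (P - X) :=
    hdecomp ▸ mul_fip_topProj_sub_le horth hkp.le hX0 hX1 hXtr
      (fun _ hi => hl (Nat.le_sub_one_of_lt hi)) (fun _ hi => hl hi)
  have hnorm : fnorm (P - X) ^ 2 ≤ 2 * fip P (P - X) := by
    rw [fnorm_sq]
    exact fip_sub_self_le_two_mul_fip_sub (by rw [fip_topProj_self horth hkp.le, hXtr]) hX0 hX1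
  have hbound : γ / 2 * fnorm (P - X) ^ 2 ≤ fip Sig (P - X) :=
    calc γ / 2 * fnorm (P - X) ^ 2 ≤ γ / 2 * (2 * fip P (P - X)) := by gcongr
      _ = γ * fip P (P - X) := by ring
      _ ≤ fip Sig (P - X) := hlower
  have hnonneg : 0 ≤ γ / 2 * fnorm (P - X) ^ 2 := by positivity
  refine ⟨hnonneg.trans hbound, hbound, fun hzero => ?_⟩
  have : fip (P - X) (P - X) = 0 := by
    rw [← fnorm_sq]
    nlinarith [sq_nonneg (fnorm (P - X))]
  exact (sub_eq_zero.mp (fip_self_eq_zero_iff.mp this)).symm
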